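/- For |q|<1 and any complex u, ∑_{i,j≥0} (-1)^i u^{i+2j} q^{i^2+2ij+2j^2-i-j} / ((q;q)_i (q^2;q^2)_j) = (u; q)_∞. -/

import Mathlib

/-!
Put `a i = q ^ (i choose 2) / (q;q)_i`. Since `i² + 2ij + 2j² - i - j = (i choose 2) + (n choose 2)`
with `n = i + 2j`, the summand is `(-u)^n q^(n choose 2) a i / (q²;q²)_j`, and grouping by `n`
the inner sums are the coefficients of `A(x) B(x)`, where `A(x) = ∑ a i x^i` and
`B(x) = ∑ x^(2j) / (q²;q²)_j`. The functional equations `A(x) = (1 + x) A(qx)` and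
`(1 - x²) B(x) = B(qx)` give `(1 - x) A(x) B(x) = A(qx) B(qx)`, which forces the `n`-th
coefficient of `A B` to be `1 / (q;q)_n`. What remains is Euler's identity
`∑ a n (-u)^n = (u;q)_∞`: the functional equation of `A`, now for the convergent sum
`E(x) = ∑ a n x^n` and iterated `N` times, gives `E(-u) = (u;q)_N E(-u q^N)`, and `E(-u q^N) → E(0) = 1`.
-/

open scoped BigOperators

noncomputable def qPoch (a q : ℂ) (n : ℕ) : ℂ :=
  ∏ k ∈ Finset.range n, (1 - a * q ^ k)

noncomputable def qPochInf (a q : ℂ) : ℂ :=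
  ∏' k : ℕ, (1 - a * q ^ k)

open Finset PowerSeries Filter Topology

theorem Nat.choose_two_succ (n : ℕ) : (n + 1).choose 2 = n.choose 2 + n := by
  simp [Nat.choose_succ_succ', add_comm]

theorem cast_choose_two_add_choose_two (i j : ℕ) :
    (((i.choose 2 + (i + 2 * j).choose 2 : ℕ)) : ℤ) =
      (i : ℤ) ^ 2 + 2 * i * j + 2 * (j : ℤ) ^ 2 - i - j := by
  apply Int.cast_injective (α := ℚ)
  push_cast [Nat.cast_choose_two]
  ring

theorem summable_pow_choose_two_mul_pow {r : ℝ} (hr₀ : 0 ≤ r) (hr : r < 1) (c : ℝ) :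
    Summable fun n : ℕ => r ^ n.choose 2 * c ^ n := by
  refine summable_of_ratio_norm_eventually_le one_half_lt_one ?_
  have hlim : Tendsto (fun n : ℕ => r ^ n * ‖c‖) atTop (𝓝 0) := by
    simpa using (tendsto_pow_atTop_nhds_zero_of_lt_one hr₀ hr).mul_const ‖c‖
  filter_upwards [hlim.eventually_le_const one_half_pos] with n hn
  calc ‖r ^ (n + 1).choose 2 * c ^ (n + 1)‖
      = r ^ n * ‖c‖ * ‖r ^ n.choose 2 * c ^ n‖ := by
        simp only [norm_mul, norm_pow, Real.norm_of_nonneg hr₀, Nat.choose_two_succ]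
        ring
    _ ≤ 1 / 2 * ‖r ^ n.choose 2 * c ^ n‖ := by gcongr

theorem tsum_eq_tsum_sum_antidiagonal {A α : Type*} [AddCommMonoid A] [HasAntidiagonal A]
    [AddCommMonoid α] [TopologicalSpace α] [ContinuousAdd α] [T3Space α]
    {f : A × A → α} (hf : Summable f) :
    ∑' p, f p = ∑' n, ∑ p ∈ antidiagonal n, f p := by
  let e := HasAntidiagonal.sigmaAntidiagonalEquivProd (A := A)
  rw [← e.tsum_eq f, Summable.tsum_sigma' (f := fun x => f (e x))
    (fun n => (hasSum_fintype _).summable) (e.summable_iff.2 hf)]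
  congr with n
  rw [tsum_fintype]
  exact Finset.sum_coe_sort _ _

theorem tsum_mul_coeff_mul_coeff_two_mul {R : Type*} [Semiring R] [TopologicalSpace R]
    [ContinuousAdd R] [T3Space R] {c : ℕ → R} {f g : R⟦X⟧} (hg : ∀ k, Odd k → coeff k g = 0)
    (h : Summable fun p : ℕ × ℕ => c (p.1 + 2 * p.2) * (coeff p.1 f * coeff (2 * p.2) g)) :
    ∑' p : ℕ × ℕ, c (p.1 + 2 * p.2) * (coeff p.1 f * coeff (2 * p.2) g) =
      ∑' n, c n * coeff n (f * g) := by
  set F : ℕ × ℕ → R := fun p => c (p.1 + p.2) * (coeff p.1 f * coeff p.2 g)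
  have he : Function.Injective fun p : ℕ × ℕ => (p.1, 2 * p.2) := by
    rintro ⟨i, j⟩ ⟨i', j'⟩ h
    simp only [Prod.mk.injEq] at h ⊢
    omega
  have hsupp : ∀ p ∉ Set.range fun p : ℕ × ℕ => (p.1, 2 * p.2), F p = 0 := by
    rintro ⟨i, k⟩ hp
    rcases Nat.even_or_odd k with ⟨j, rfl⟩ | hk
    · exact absurd ⟨(i, j), by simp [two_mul]⟩ hp
    · simp [F, hg k hk]
  rw [he.tsum_eq (f := F) (Function.support_subset_iff'.2 hsupp),
    tsum_eq_tsum_sum_antidiagonal ((he.summable_iff hsupp).1 h)]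
  congr with n
  rw [coeff_mul, mul_sum]
  exact sum_congr rfl fun p hp => by rw [← mem_antidiagonal.1 hp]

theorem qPoch_zero (a q : ℂ) : qPoch a q 0 = 1 := prod_range_zero _

theorem qPoch_succ (a q : ℂ) (n : ℕ) : qPoch a q (n + 1) = qPoch a q n * (1 - a * q ^ n) :=
  prod_range_succ _ _

theorem pow_le_norm_qPoch {a Q : ℂ} {r : ℝ} (hr : r ≤ 1) (h : ∀ k, ‖a * Q ^ k‖ ≤ r) (n : ℕ) :
    (1 - r) ^ n ≤ ‖qPoch a Q n‖ := by
  induction n with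
  | zero => simp [qPoch_zero]
  | succ n ih =>
    have hfactor : 1 - r ≤ ‖1 - a * Q ^ n‖ := by
      have := norm_sub_norm_le (1 : ℂ) (a * Q ^ n)
      rw [norm_one] at this
      linarith [h n]
    rw [qPoch_succ, norm_mul, pow_succ]
    exact mul_le_mul ih hfactor (sub_nonneg.2 hr) (norm_nonneg _)

theorem norm_inv_qPoch_le {a Q : ℂ} {r : ℝ} (hr : r < 1) (h : ∀ k, ‖a * Q ^ k‖ ≤ r) (n : ℕ) :
    ‖(qPoch a Q n)⁻¹‖ ≤ (1 - r)⁻¹ ^ n := by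
  rw [norm_inv, inv_pow]
  exact inv_anti₀ (pow_pos (sub_pos.2 hr) n) (pow_le_norm_qPoch hr.le h n)

theorem qPoch_ne_zero {a Q : ℂ} {r : ℝ} (hr : r < 1) (h : ∀ k, ‖a * Q ^ k‖ ≤ r) (n : ℕ) :
    qPoch a Q n ≠ 0 :=
  norm_pos_iff.1 <| (pow_pos (sub_pos.2 hr) n).trans_le (pow_le_norm_qPoch hr.le h n)

section

variable {q : ℂ}

theorem norm_mul_pow_le (hq : ‖q‖ ≤ 1) (k : ℕ) : ‖q * q ^ k‖ ≤ ‖q‖ := by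
  rw [← pow_succ', norm_pow]
  exact pow_le_of_le_one (norm_nonneg q) hq k.succ_ne_zero

theorem norm_sq_mul_pow_le (hq : ‖q‖ ≤ 1) (k : ℕ) : ‖q ^ 2 * (q ^ 2) ^ k‖ ≤ ‖q‖ := by
  rw [← pow_succ', ← pow_mul, norm_pow]
  exact pow_le_of_le_one (norm_nonneg q) hq (by positivity)

theorem qPoch_self_ne_zero (hq : ‖q‖ < 1) (n : ℕ) : qPoch q q n ≠ 0 :=
  qPoch_ne_zero hq (norm_mul_pow_le hq.le) n

theorem qPoch_sq_ne_zero (hq : ‖q‖ < 1) (n : ℕ) : qPoch (q ^ 2) (q ^ 2) n ≠ 0 :=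
  qPoch_ne_zero hq (norm_sq_mul_pow_le hq.le) n

noncomputable def eulerCoeff (q : ℂ) (n : ℕ) : ℂ := q ^ n.choose 2 / qPoch q q n

theorem eulerCoeff_zero : eulerCoeff q 0 = 1 := by simp [eulerCoeff, qPoch_zero]

theorem eulerCoeff_succ (hq : ‖q‖ < 1) (n : ℕ) :
    eulerCoeff q (n + 1) = q ^ (n + 1) * eulerCoeff q (n + 1) + q ^ n * eulerCoeff q n := by
  obtain ⟨hP, hfactor⟩ := mul_ne_zero_iff.1 (qPoch_succ q q n ▸ qPoch_self_ne_zero hq (n + 1))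
  rw [eulerCoeff, eulerCoeff, qPoch_succ, Nat.choose_two_succ]
  field_simp
  ring

theorem norm_eulerCoeff_le (hq : ‖q‖ < 1) (n : ℕ) :
    ‖eulerCoeff q n‖ ≤ ‖q‖ ^ n.choose 2 * (1 - ‖q‖)⁻¹ ^ n := by
  rw [eulerCoeff, div_eq_mul_inv, norm_mul, norm_pow]
  gcongr
  exact norm_inv_qPoch_le hq (norm_mul_pow_le hq.le) n

noncomputable def eulerSeries (q : ℂ) : ℂ⟦X⟧ := mk (eulerCoeff q)

noncomputable def sqInvQPochSeries (q : ℂ) : ℂ⟦X⟧ :=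
  mk fun k => if Even k then (qPoch (q ^ 2) (q ^ 2) (k / 2))⁻¹ else 0

theorem coeff_two_mul_sqInvQPochSeries (j : ℕ) :
    coeff (2 * j) (sqInvQPochSeries q) = (qPoch (q ^ 2) (q ^ 2) j)⁻¹ := by
  simp [sqInvQPochSeries]

theorem coeff_sqInvQPochSeries_of_odd {k : ℕ} (hk : Odd k) :
    coeff k (sqInvQPochSeries q) = 0 := by
  simp [sqInvQPochSeries, Nat.not_even_iff_odd.2 hk]

theorem one_add_X_mul_rescale_eulerSeries (hq : ‖q‖ < 1) :
    (1 + X) * rescale q (eulerSeries q) = eulerSeries q := by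
  ext n
  rw [add_mul, one_mul, map_add, coeff_rescale]
  rcases n with _ | n
  · simp [eulerSeries]
  · rw [coeff_succ_X_mul, coeff_rescale]
    simp only [eulerSeries, coeff_mk]
    exact (eulerCoeff_succ hq n).symm

theorem one_sub_X_sq_mul_sqInvQPochSeries (hq : ‖q‖ < 1) :
    (1 - X ^ 2) * sqInvQPochSeries q = rescale q (sqInvQPochSeries q) := by
  ext n
  rw [sub_mul, one_mul, map_sub, coeff_X_pow_mul', coeff_rescale]
  rcases n with _ | _ | n
  · simp
  · simp [sqInvQPochSeries]
  · rw [if_pos (by omega), show n + 1 + 1 - 2 = n by omega]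
    rcases Nat.even_or_odd n with ⟨j, rfl⟩ | hodd
    · rw [← two_mul, show 2 * j + 1 + 1 = 2 * (j + 1) by ring, coeff_two_mul_sqInvQPochSeries,
        coeff_two_mul_sqInvQPochSeries]
      obtain ⟨hP, hfactor⟩ := mul_ne_zero_iff.1 (qPoch_succ _ _ j ▸ qPoch_sq_ne_zero hq (j + 1))
      rw [qPoch_succ]
      field_simp
      ring
    · have hodd2 : Odd (n + 2) := hodd.add_even even_two
      simp [coeff_sqInvQPochSeries_of_odd hodd, coeff_sqInvQPochSeries_of_odd hodd2]

theorem qPoch_mul_coeff_of_one_sub_X_mul_eq_rescale {f : ℂ⟦X⟧} (hf : (1 - X) * f = rescale q f)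
    (n : ℕ) : qPoch q q n * coeff n f = constantCoeff f := by
  induction n with
  | zero => simp [qPoch_zero]
  | succ n ih =>
    have key := congrArg (coeff (n + 1)) hf
    simp only [sub_mul, one_mul, map_sub, coeff_succ_X_mul, coeff_rescale] at key
    rw [qPoch_succ]
    linear_combination ih + qPoch q q n * key

theorem coeff_eulerSeries_mul_sqInvQPochSeries (hq : ‖q‖ < 1) (n : ℕ) :
    coeff n (eulerSeries q * sqInvQPochSeries q) = (qPoch q q n)⁻¹ := by
  have hf : (1 - X) * (eulerSeries q * sqInvQPochSeries q) =
      rescale q (eulerSeries q * sqInvQPochSeries q) := by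
    rw [map_mul]
    linear_combination (X - 1) * sqInvQPochSeries q * one_add_X_mul_rescale_eulerSeries hq +
      rescale q (eulerSeries q) * one_sub_X_sq_mul_sqInvQPochSeries hq
  refine (inv_eq_of_mul_eq_one_right ?_).symm
  rw [qPoch_mul_coeff_of_one_sub_X_mul_eq_rescale hf, map_mul]
  simp [eulerSeries, sqInvQPochSeries, eulerCoeff_zero, qPoch_zero]

noncomputable def eulerSum (q x : ℂ) : ℂ := ∑' n, eulerCoeff q n * x ^ n

theorem summable_norm_eulerCoeff_mul_pow (hq : ‖q‖ < 1) (x : ℂ) :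
    Summable fun n => ‖eulerCoeff q n * x ^ n‖ := by
  refine .of_nonneg_of_le (fun _ => norm_nonneg _) (fun n => ?_)
    (summable_pow_choose_two_mul_pow (norm_nonneg q) hq ((1 - ‖q‖)⁻¹ * ‖x‖))
  rw [norm_mul, norm_pow, mul_pow, ← mul_assoc]
  gcongr
  exact norm_eulerCoeff_le hq n

theorem eulerSum_eq_one_add_mul (hq : ‖q‖ < 1) (x : ℂ) :
    eulerSum q x = (1 + x) * eulerSum q (q * x) := by
  have hs y := (summable_norm_eulerCoeff_mul_pow hq y).of_norm
  have hshift : ∑' n, eulerCoeff q (n + 1) * x ^ (n + 1) =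
      ∑' n, eulerCoeff q (n + 1) * (q * x) ^ (n + 1) + x * eulerSum q (q * x) := by
    rw [eulerSum, ← tsum_mul_left,
      ← ((summable_nat_add_iff 1).2 (hs _)).tsum_add ((hs _).mul_left x)]
    congr with n
    linear_combination x ^ (n + 1) * eulerCoeff_succ hq n
  rw [eulerSum, (hs x).tsum_eq_zero_add, hshift, eulerSum, (hs (q * x)).tsum_eq_zero_add]
  ring

theorem eulerSum_neg_eq_qPoch_mul (hq : ‖q‖ < 1) (u : ℂ) (N : ℕ) :
    eulerSum q (-u) = qPoch u q N * eulerSum q (-(u * q ^ N)) := by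
  induction N with
  | zero => rw [qPoch_zero, pow_zero, mul_one, one_mul]
  | succ N ih =>
    rw [ih, eulerSum_eq_one_add_mul hq, qPoch_succ,
      show q * -(u * q ^ N) = -(u * q ^ (N + 1)) by ring]
    ring

theorem eulerSum_zero : eulerSum q 0 = 1 := by
  rw [eulerSum, tsum_eq_single 0 fun n hn => by simp [hn]]
  simp [eulerCoeff_zero]

theorem tendsto_eulerSum_neg_mul_pow (hq : ‖q‖ < 1) (u : ℂ) :
    Tendsto (fun N => eulerSum q (-(u * q ^ N))) atTop (𝓝 1) := by
  have hlim : Tendsto (fun N => -(u * q ^ N)) atTop (𝓝 0) := by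
    simpa using ((tendsto_pow_atTop_nhds_zero_of_norm_lt_one hq).const_mul u).neg
  rw [← eulerSum_zero (q := q)]
  refine tendsto_tsum_of_dominated_convergence (summable_norm_eulerCoeff_mul_pow hq u)
    (fun n => (hlim.pow n).const_mul _) (.of_forall fun N n => ?_)
  rw [norm_mul, norm_mul, norm_pow, norm_pow, norm_neg, norm_mul, norm_pow, mul_pow]
  gcongr
  exact mul_le_of_le_one_right (by positivity)
    (pow_le_one₀ (by positivity) (pow_le_one₀ (norm_nonneg q) hq.le))

theorem multipliable_one_sub_mul_pow (hq : ‖q‖ < 1) (u : ℂ) :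
    Multipliable fun k => 1 - u * q ^ k := by
  simpa [sub_eq_add_neg] using multipliable_one_add_of_summable (f := fun k => -(u * q ^ k))
    (by simpa [norm_pow] using (summable_geometric_of_lt_one (norm_nonneg q) hq).mul_left ‖u‖)

theorem eulerSum_neg_eq_qPochInf (hq : ‖q‖ < 1) (u : ℂ) : eulerSum q (-u) = qPochInf u q := by
  have hprod : Tendsto (qPoch u q) atTop (𝓝 (qPochInf u q)) :=
    (multipliable_one_sub_mul_pow hq u).hasProd.tendsto_prod_nat
  have hlim := hprod.mul (tendsto_eulerSum_neg_mul_pow hq u)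
  rw [mul_one] at hlim
  exact tendsto_nhds_unique (tendsto_const_nhds.congr (eulerSum_neg_eq_qPoch_mul hq u)) hlim

theorem term_eq_mul_coeff_mul_coeff (u : ℂ) (i j : ℕ) :
    (-1) ^ i * u ^ (i + 2 * j) * q ^ ((i : ℤ) ^ 2 + 2 * i * j + 2 * (j : ℤ) ^ 2 - i - j) /
        (qPoch q q i * qPoch (q ^ 2) (q ^ 2) j) =
      (-u) ^ (i + 2 * j) * q ^ (i + 2 * j).choose 2 *
        (coeff i (eulerSeries q) * coeff (2 * j) (sqInvQPochSeries q)) := by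
  rw [← cast_choose_two_add_choose_two, zpow_natCast, coeff_two_mul_sqInvQPochSeries,
    eulerSeries, coeff_mk, eulerCoeff, neg_pow u, pow_add (-1 : ℂ) i, pow_mul, neg_one_sq,
    one_pow, mul_one, pow_add q]
  ring

theorem summable_mul_coeff_eulerSeries_mul_coeff (hq : ‖q‖ < 1) (u : ℂ) :
    Summable fun p : ℕ × ℕ => (-u) ^ (p.1 + 2 * p.2) * q ^ (p.1 + 2 * p.2).choose 2 *
      (coeff p.1 (eulerSeries q) * coeff (2 * p.2) (sqInvQPochSeries q)) := by
  set r := ‖q‖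
  set w := (1 - r)⁻¹
  have hr₀ : 0 ≤ r := norm_nonneg q
  have hw : 0 ≤ w := inv_nonneg.2 (sub_nonneg.2 hq.le)
  refine .of_norm_bounded ((summable_pow_choose_two_mul_pow hr₀ hq (‖u‖ * w)).mul_of_nonneg
    (summable_pow_choose_two_mul_pow hr₀ hq (‖u‖ ^ 2 * w)) (fun _ => by positivity)
    fun _ => by positivity) fun ⟨i, j⟩ => ?_
  rw [coeff_two_mul_sqInvQPochSeries, eulerSeries, coeff_mk]
  calc _ = ‖u‖ ^ (i + 2 * j) * r ^ (i + 2 * j).choose 2 *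
        (‖eulerCoeff q i‖ * ‖(qPoch (q ^ 2) (q ^ 2) j)⁻¹‖) := by
        simp only [norm_mul, norm_pow, norm_neg, r]
    _ ≤ ‖u‖ ^ (i + 2 * j) * r ^ j.choose 2 * ((r ^ i.choose 2 * w ^ i) * w ^ j) := by
        have hpow : r ^ (i + 2 * j).choose 2 ≤ r ^ j.choose 2 :=
          pow_le_pow_of_le_one hr₀ hq.le (Nat.choose_le_choose 2 (by omega))
        have hb := norm_inv_qPoch_le hq (norm_sq_mul_pow_le hq.le) j
        exact mul_le_mul (mul_le_mul_of_nonneg_left hpow (by positivity))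
          (mul_le_mul (norm_eulerCoeff_le hq i) hb (norm_nonneg _) (by positivity))
          (by positivity) (by positivity)
    _ = r ^ i.choose 2 * (‖u‖ * w) ^ i * (r ^ j.choose 2 * (‖u‖ ^ 2 * w) ^ j) := by ring

end

theorem stmt_10 (q u : ℂ) (hq : ‖q‖ < 1) :
    ∑' p : ℕ × ℕ,
      ((-1 : ℂ) ^ p.1 * u ^ (p.1 + 2 * p.2) *
          q ^ ((p.1 : ℤ) ^ 2 + 2 * p.1 * p.2 + 2 * (p.2 : ℤ) ^ 2 - p.1 - p.2)) /
        (qPoch q q p.1 * qPoch (q ^ 2) (q ^ 2) p.2)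
      = qPochInf u q := by
  calc _ = ∑' p : ℕ × ℕ, (-u) ^ (p.1 + 2 * p.2) * q ^ (p.1 + 2 * p.2).choose 2 *
        (coeff p.1 (eulerSeries q) * coeff (2 * p.2) (sqInvQPochSeries q)) :=
        tsum_congr fun p => term_eq_mul_coeff_mul_coeff u p.1 p.2
    _ = ∑' n, (-u) ^ n * q ^ n.choose 2 * coeff n (eulerSeries q * sqInvQPochSeries q) :=
        tsum_mul_coeff_mul_coeff_two_mul (c := fun n => (-u) ^ n * q ^ n.choose 2)
          (fun _ => coeff_sqInvQPochSeries_of_odd)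
          (summable_mul_coeff_eulerSeries_mul_coeff hq u)
    _ = eulerSum q (-u) := by
        refine tsum_congr fun n => ?_
        rw [coeff_eulerSeries_mul_sqInvQPochSeries hq, eulerCoeff, div_eq_mul_inv]
        ring
    _ = qPochInf u q := eulerSum_neg_eq_qPochInf hq u
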